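/- For every real x with 0 < x < 1 and integer N ≥ 2, ∑_{L=1}^{N} binom(N,L) (Lx/N)^{L-1}(1-Lx/N)^{N-L-1} = (N-(N-1)x)/(1-x) when the substitution α = x is made; i.e., ∑_{L=1}^{N} binom(N,L)(Lα/N)^{L-1}(1-Lα/N)^{N-L-1} = (N-(N-1)α)/(1-α). -/

import Mathlib

/-!
Abel's identity `∑_{k=1}^n C(n,k) k^(k-1) (z-k)^(n-k) = n z^(n-1)` holds by induction on `n`:
the derivative in `z` of the order-`(n+1)` sum is `n+1` times the order-`n` sum, and at `z = 0`
the sum is an `(n+1)`-st forward difference of `x ↦ x^n`, hence zero.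

Writing `z = N/α`, the `L`-th summand of the theorem is `(α/N)^(N-2) C(N,L) L^(L-1) (z-L)^(N-L-1)`.
Since `(z - N)(z-k)^(N-k-1) = (z-k)^(N-k) - (N-k)(z-k)^(N-k-1)`, multiplying that sum by `z - N`
gives the difference of Abel sums of orders `N` and `N-1`.
-/

open Finset

theorem sum_range_neg_one_pow_mul_choose_mul_pow {R : Type*} [CommRing R] {j n : ℕ} (h : j < n) :
    ∑ k ∈ range (n + 1), (-1 : R) ^ (n - k) * n.choose k * (k : R) ^ j = 0 := by
  have := congr_fun (fwdDiff_iter_pow_eq_zero_of_lt (R := R) h) 0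
  rw [fwdDiff_iter_eq_sum_shift] at this
  simpa [zsmul_eq_mul, nsmul_eq_mul] using this

theorem sum_range_succ_eq_add_sum_Icc_one {M : Type*} [AddCommMonoid M] (f : ℕ → M) (n : ℕ) :
    ∑ k ∈ range (n + 1), f k = f 0 + ∑ k ∈ Icc 1 n, f k := by
  rw [range_eq_Ico, sum_eq_sum_Ico_succ_bot n.succ_pos]
  rfl

def abelSum (n : ℕ) (z : ℝ) : ℝ :=
  ∑ k ∈ Icc 1 n, (n.choose k : ℝ) * (k : ℝ) ^ (k - 1) * (z - k) ^ (n - k)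

theorem sum_choose_mul_sub_mul_pow_eq_mul_abelSum (n : ℕ) (z : ℝ) :
    ∑ k ∈ Icc 1 (n + 1), ((n + 1).choose k : ℝ) * (k : ℝ) ^ (k - 1) *
      (((n + 1 - k : ℕ) : ℝ) * (z - k) ^ (n - k)) = (n + 1) * abelSum n z := by
  rw [abelSum, mul_sum, sum_Icc_succ_top (by omega : 1 ≤ n + 1)]
  simp only [Nat.sub_self, Nat.cast_zero, zero_mul, mul_zero, add_zero]
  refine sum_congr rfl fun k _ => ?_
  have h := congr_arg (Nat.cast : ℕ → ℝ) (Nat.choose_mul_succ_eq n k)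
  push_cast at h
  linear_combination (-((k : ℝ) ^ (k - 1) * (z - k) ^ (n - k))) * h

theorem hasDerivAt_abelSum_succ (n : ℕ) (z : ℝ) :
    HasDerivAt (abelSum (n + 1)) ((n + 1) * abelSum n z) z := by
  rw [← sum_choose_mul_sub_mul_pow_eq_mul_abelSum]
  unfold abelSum
  refine HasDerivAt.fun_sum fun k _ => ?_
  have := ((hasDerivAt_id z).sub_const (k : ℝ)).pow (n + 1 - k)
  simp only [id, mul_one, show n + 1 - k - 1 = n - k by omega] at this
  exact this.const_mul _

theorem abelSum_succ_apply_zero {n : ℕ} (hn : n ≠ 0) : abelSum (n + 1) 0 = 0 := by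
  have h := sum_range_neg_one_pow_mul_choose_mul_pow (R := ℝ) (Nat.lt_succ_self n)
  rw [sum_range_succ_eq_add_sum_Icc_one] at h
  simp only [Nat.cast_zero, zero_pow hn, mul_zero, zero_add] at h
  refine (sum_congr rfl fun k hk => ?_).trans h
  obtain ⟨hk1, hkn⟩ := mem_Icc.mp hk
  have hpow : (k : ℝ) ^ (k - 1) * (k : ℝ) ^ (n + 1 - k) = (k : ℝ) ^ n := by
    rw [← pow_add, show k - 1 + (n + 1 - k) = n by omega]
  rw [zero_sub, neg_pow]
  linear_combination ((-1 : ℝ) ^ (n + 1 - k) * ((n + 1).choose k : ℝ)) * hpow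

theorem abelSum_eq (n : ℕ) (z : ℝ) : abelSum n z = n * z ^ (n - 1) := by
  induction n generalizing z with
  | zero => simp [abelSum]
  | succ n ih =>
    rcases eq_or_ne n 0 with rfl | hn
    · simp [abelSum]
    have hderiv : ∀ x, HasDerivAt (fun x => abelSum (n + 1) x - (n + 1) * x ^ n) 0 x := by
      intro x
      have := (hasDerivAt_abelSum_succ n x).sub ((hasDerivAt_pow n x).const_mul ((n : ℝ) + 1))
      rwa [ih, sub_self] at this
    have := is_const_of_deriv_eq_zero (fun x => (hderiv x).differentiableAt)
      (fun x => (hderiv x).deriv) z 0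
    simp only [abelSum_succ_apply_zero hn, zero_pow hn, mul_zero, sub_zero] at this
    push_cast
    simpa [sub_eq_zero] using this

theorem sum_choose_mul_pow_mul_zpow (n : ℕ) (hn : 2 ≤ n) (z : ℝ) (hz : z ≠ n) :
    ∑ k ∈ Icc 1 n, (n.choose k : ℝ) * (k : ℝ) ^ (k - 1) * (z - k) ^ ((n : ℤ) - k - 1) =
      n * z ^ (n - 2) * (z - (n - 1)) / (z - n) := by
  rw [eq_div_iff (sub_ne_zero.2 hz), sum_mul]
  obtain ⟨m, rfl⟩ : ∃ m, n = m + 1 := ⟨n - 1, by omega⟩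
  have hterm : ∀ k ∈ Icc 1 (m + 1), (z - k) ^ (((m + 1 : ℕ) : ℤ) - k - 1) * (z - (m + 1 : ℕ)) =
      (z - k) ^ (m + 1 - k) - ((m + 1 - k : ℕ) : ℝ) * (z - k) ^ (m - k) := by
    intro k hk
    obtain ⟨hk1, hkm⟩ := mem_Icc.mp hk
    rcases hkm.eq_or_lt with rfl | hkm
    · simpa using inv_mul_cancel₀ (sub_ne_zero.2 hz)
    · have hkm : k ≤ m := by omega
      rw [show ((m + 1 : ℕ) : ℤ) - k - 1 = ((m - k : ℕ) : ℤ) by omega, zpow_natCast,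
        show m + 1 - k = m - k + 1 by omega, pow_succ]
      push_cast [hkm]
      ring
  calc ∑ k ∈ Icc 1 (m + 1), ((m + 1).choose k : ℝ) * (k : ℝ) ^ (k - 1) *
        (z - k) ^ (((m + 1 : ℕ) : ℤ) - k - 1) * (z - (m + 1 : ℕ))
      = abelSum (m + 1) z - (m + 1) * abelSum m z := by
        rw [← sum_choose_mul_sub_mul_pow_eq_mul_abelSum, abelSum, ← sum_sub_distrib]
        refine sum_congr rfl fun k hk => ?_
        rw [mul_assoc _ (_ ^ _), hterm k hk]
        ring
    _ = _ := by
        rw [abelSum_eq, abelSum_eq, show m = m - 1 + 1 by omega]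
        push_cast
        ring_nf

theorem abelian_reciprocal_normalizer (N : ℕ) (hN : 2 ≤ N) (α : ℝ) (hα0 : 0 < α) (hα1 : α < 1) :
    ∑ L ∈ Finset.Icc 1 N,
      (N.choose L : ℝ) * (L * α / N) ^ (L - 1) * (1 - L * α / N) ^ ((N : ℤ) - L - 1) =
      (N - (N - 1) * α) / (1 - α) := by
  have hN0 : (N : ℝ) ≠ 0 := by positivity
  set c := α / N with hc
  set z := N / α with hz
  have hcz : c * z = 1 := by rw [hc, hz]; field_simp
  have hzN : z ≠ N := by
    rw [hz, Ne, div_eq_iff hα0.ne']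
    nlinarith [show (0 : ℝ) < N by positivity]
  have hterm : ∀ L ∈ Icc 1 N,
      (N.choose L : ℝ) * (L * α / N) ^ (L - 1) * (1 - L * α / N) ^ ((N : ℤ) - L - 1) =
        c ^ (N - 2) * ((N.choose L : ℝ) * (L : ℝ) ^ (L - 1) * (z - L) ^ ((N : ℤ) - L - 1)) := by
    intro L hL
    obtain ⟨hL1, hLN⟩ := mem_Icc.mp hL
    have hpow : c ^ (L - 1) * c ^ ((N : ℤ) - L - 1) = c ^ (N - 2) := by
      rw [← zpow_natCast, ← zpow_add₀ (by positivity), ← zpow_natCast]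
      congr 1
      omega
    rw [show 1 - L * α / N = c * (z - L) by rw [hc, hz]; field_simp,
      show L * α / N = c * L by ring, mul_pow, mul_zpow, ← hpow]
    ring
  rw [sum_congr rfl hterm, ← mul_sum, sum_choose_mul_pow_mul_zpow N hN z hzN]
  have hcz_pow : c ^ (N - 2) * z ^ (N - 2) = 1 := by rw [← mul_pow, hcz, one_pow]
  calc c ^ (N - 2) * (N * z ^ (N - 2) * (z - (N - 1)) / (z - N))
      = c ^ (N - 2) * z ^ (N - 2) * (N * (z - (N - 1)) / (z - N)) := by ring
    _ = (N - (N - 1) * α) / (1 - α) := by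
        rw [hcz_pow, one_mul, hz]
        field_simp
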